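/- Let H be a strongly primary monoid. For every atom u ∈ H, we have ω(u) ≤ M(u), where M(u) is the smallest n ∈ ℕ with mⁿ ⊆ uH; in particular ω(u) < ∞. -/

import Mathlib

open Pointwise

section MonoidDefs

variable {G : Type*} [CommGroup G]

/-- `x` is a unit of the submonoid `H`. -/
def IsHUnit (H : Submonoid G) (x : G) : Prop := x ∈ H ∧ x⁻¹ ∈ H

/-- The set of non-units of `H`. -/
def nonUnits (H : Submonoid G) : Set G := {x | x ∈ H ∧ x⁻¹ ∉ H}

/-- `u` is an atom (irreducible element) of `H`. -/
def IsHAtom (H : Submonoid G) (u : G) : Prop :=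
  u ∈ H ∧ ¬ IsHUnit H u ∧
    ∀ a b : G, a ∈ H → b ∈ H → u = a * b → IsHUnit H a ∨ IsHUnit H b

/-- `G` is the quotient group of `H`. -/
def IsQuotientGroup (H : Submonoid G) : Prop :=
  ∀ g : G, ∃ a ∈ H, ∃ b ∈ H, g = a / b

/-- `H` is a primary monoid. -/
def IsPrimaryMonoid (H : Submonoid G) : Prop :=
  (nonUnits H).Nonempty ∧
    ∀ a ∈ nonUnits H, ∀ b ∈ nonUnits H, ∃ n : ℕ, 0 < n ∧ b ^ n ∈ a • (H : Set G)

/-- `H` is a strongly primary monoid. -/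
def IsStronglyPrimary (H : Submonoid G) : Prop :=
  (nonUnits H).Nonempty ∧
    ∀ a ∈ nonUnits H, ∃ n : ℕ, 0 < n ∧ nonUnits H ^ n ⊆ a • (H : Set G)

/-- `x` and `y` are associated in `H`. -/
def HAssoc (H : Submonoid G) (x y : G) : Prop := IsHUnit H (x / y)

/-- The set of lengths of `a`: all `k` such that `a` is a product of `k` atoms
(up to a unit of `H`). -/
def lengthSet (H : Submonoid G) (a : G) : Set ℕ :=
  {k | ∃ s : Multiset G, Multiset.card s = k ∧ (∀ v ∈ s, IsHAtom H v) ∧ HAssoc H a s.prod}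

/-- `Λ(S)`, the supremum of the minimal factorization lengths of elements of `S`. -/
noncomputable def Lambda (H : Submonoid G) (S : Set G) : ℕ∞ :=
  ⨆ (a : G) (_ : a ∈ S) (_ : (lengthSet H a).Nonempty), ((sInf (lengthSet H a) : ℕ) : ℕ∞)

/-- `ρ_k(H)`, the supremum of `sup L(a)` over all `a` with `k ∈ L(a)`. -/
noncomputable def rho (H : Submonoid G) (k : ℕ∞) : ℕ∞ :=
  ⨆ (a : G) (_ : a ∈ H) (_ : ∃ n ∈ lengthSet H a, (n : ℕ∞) = k),
    ⨆ (n : ℕ) (_ : n ∈ lengthSet H a), (n : ℕ∞)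

/-- The elasticity `ρ(H) = sup { m/n : m, n ∈ L(a), a ∈ H }`. -/
noncomputable def elasticity (H : Submonoid G) : ENNReal :=
  ⨆ (a : G) (_ : a ∈ H) (m : ℕ) (_ : m ∈ lengthSet H a) (n : ℕ) (_ : n ∈ lengthSet H a),
    (m : ENNReal) / (n : ENNReal)

/-- `z` is a factorization of `a`: a multiset of atoms whose product is associated to `a`. -/
def IsFactorization (H : Submonoid G) (a : G) (z : Multiset G) : Prop :=
  (∀ v ∈ z, IsHAtom H v) ∧ HAssoc H a z.prod

/-- The distance between two factorizations: cancel a (maximal) common part (up to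
associates) and take the maximum of the lengths of the remaining parts. -/
noncomputable def fdist (H : Submonoid G) (z z' : Multiset G) : ℕ :=
  sInf {N : ℕ | ∃ x x' v w : Multiset G, z = x + v ∧ z' = x' + w ∧
    Multiset.Rel (HAssoc H) x x' ∧ max (Multiset.card v) (Multiset.card w) ≤ N}

/-- `N` is a tame bound for the atom `u`: for every multiple `a` of `u` and every
factorization `z` of `a` there is a factorization `z'` of `a` containing `u`
with `d(z, z') ≤ N`. -/
def TameBound (H : Submonoid G) (u : G) (N : ℕ) : Prop :=
  ∀ a ∈ H, (∃ b ∈ H, a = u * b) → ∀ z : Multiset G, IsFactorization H a z →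
    ∃ z' : Multiset G, IsFactorization H a z' ∧ (∃ v ∈ z', HAssoc H v u) ∧ fdist H z z' ≤ N

/-- `H` is locally tame: `t(u) < ∞` for every atom `u`. -/
def LocallyTame (H : Submonoid G) : Prop :=
  ∀ u : G, IsHAtom H u → ∃ N : ℕ, TameBound H u N

/-- `H` is globally tame: `sup { t(u) : u an atom } < ∞`. -/
def GloballyTame (H : Submonoid G) : Prop :=
  ∃ N : ℕ, ∀ u : G, IsHAtom H u → TameBound H u N

/-- The local tame degree `t(u)` of `u`. -/
noncomputable def tameDeg (H : Submonoid G) (u : G) : ℕ∞ :=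
  sInf {N : ℕ∞ | ∃ n : ℕ, TameBound H u n ∧ N = (n : ℕ∞)}

/-- `N` is an omega bound for `a`: whenever `a` divides a product of elements of `H`,
it divides a subproduct with at most `N` factors. -/
def OmegaBound (H : Submonoid G) (a : G) (N : ℕ) : Prop :=
  ∀ s : Multiset G, (∀ x ∈ s, x ∈ H) → (∃ c ∈ H, s.prod = a * c) →
    ∃ t : Multiset G, t ≤ s ∧ Multiset.card t ≤ N ∧ ∃ c ∈ H, t.prod = a * c

/-- The omega invariant `ω(a)`. -/
noncomputable def omegaDeg (H : Submonoid G) (a : G) : ℕ∞ :=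
  sInf {N : ℕ∞ | ∃ n : ℕ, OmegaBound H a n ∧ N = (n : ℕ∞)}

/-- `M(x)`: the smallest `n ≥ 1` with `mⁿ ⊆ xH`. -/
noncomputable def Mdeg (H : Submonoid G) (x : G) : ℕ :=
  sInf {n : ℕ | 0 < n ∧ nonUnits H ^ n ⊆ x • (H : Set G)}

/-- The complete integral closure `Ĥ` of `H` (inside the quotient group). -/
def hatH (H : Submonoid G) : Set G := {x | ∃ c ∈ H, ∀ n : ℕ, c * x ^ n ∈ H}

/-- The set of non-units of `Ĥ`. -/
def hatNonUnits (H : Submonoid G) : Set G := {x | x ∈ hatH H ∧ x⁻¹ ∉ hatH H}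

/-- The root closure `H̃` of `H`. -/
def tildeH (H : Submonoid G) : Set G := {x | ∃ n : ℕ, 0 < n ∧ x ^ n ∈ H}

/-- The set of non-units of `H̃`. -/
def tildeNonUnits (H : Submonoid G) : Set G := {x | x ∈ tildeH H ∧ x⁻¹ ∉ tildeH H}

/-- The seminormal closure `H'` of `H`. -/
def seminormalClosure (H : Submonoid G) : Set G :=
  {x | ∃ N : ℕ, ∀ n : ℕ, N ≤ n → x ^ n ∈ H}

/-- The conductor `(H : Ĥ)`. -/
def conductorH (H : Submonoid G) : Set G := {z | ∀ x ∈ hatH H, z * x ∈ H}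

/-- `Ĥ` is a primary monoid. -/
def HatPrimary (H : Submonoid G) : Prop :=
  (hatNonUnits H).Nonempty ∧
    ∀ a ∈ hatNonUnits H, ∀ b ∈ hatNonUnits H,
      ∃ n : ℕ, 0 < n ∧ ∃ c ∈ hatH H, b ^ n = a * c

/-- `Ĥ` is a valuation monoid. -/
def HatValuation (H : Submonoid G) : Prop :=
  ∀ a ∈ hatH H, ∀ b ∈ hatH H,
    (∃ c ∈ hatH H, b = a * c) ∨ (∃ c ∈ hatH H, a = b * c)

/-- `H` is atomic. -/
def Atomic (H : Submonoid G) : Prop :=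
  ∀ a ∈ nonUnits H, ∃ s : Multiset G, (∀ v ∈ s, IsHAtom H v) ∧ a = s.prod

/-- `H` is a discrete valuation monoid, i.e. `H_red ≅ (ℕ₀, +)`. -/
def IsDiscreteValuationMonoid (H : Submonoid G) : Prop :=
  ∃ p ∈ H, ¬ IsHUnit H p ∧ ∀ a ∈ H, ∃ n : ℕ, ∃ ε : G, IsHUnit H ε ∧ a = ε * p ^ n

end MonoidDefs


/-!
Units among the factors can be absorbed into the cofactor, and once at least `M(a)` non-units
occur, any `M(a)` of them already multiply into `mᴹ⁽ᵃ⁾ ⊆ aH`. So `a` divides a subproduct with at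
most `M(a)` factors. Strong primality is what makes `M(a)` an honest minimum rather than the junk
value `sInf ∅ = 0`.
-/

namespace Multiset

variable {α : Type*}

lemma exists_le_card_eq {s : Multiset α} {n : ℕ} (hn : n ≤ card s) :
    ∃ t ≤ s, card t = n := by
  obtain ⟨t, ht⟩ := card_pos_iff_exists_mem.mp
    (by rw [card_powersetCard]; exact Nat.choose_pos hn)
  exact ⟨t, mem_powersetCard.mp ht⟩

lemma prod_mem_pow_card [CommMonoid α] {S : Set α} {t : Multiset α} (h : ∀ x ∈ t, x ∈ S) :
    t.prod ∈ S ^ card t := by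
  simpa using Set.multiset_prod_mem_multiset_prod t (fun _ => S) id h

end Multiset

section StronglyPrimary

variable {G : Type*} [CommGroup G] {H : Submonoid G}

lemma isHUnit_multiset_prod {t : Multiset G} (h : ∀ x ∈ t, IsHUnit H x) :
    IsHUnit H t.prod := by
  refine ⟨H.multiset_prod_mem t fun x hx => (h x hx).1, ?_⟩
  rw [← Multiset.prod_map_inv']
  exact H.multiset_prod_mem _ (by simpa using fun x hx => (h x hx).2)

lemma IsHAtom.mem_nonUnits {u : G} (hu : IsHAtom H u) : u ∈ nonUnits H :=
  ⟨hu.1, fun h => hu.2.1 ⟨hu.1, h⟩⟩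

lemma omegaBound_of_nonUnits_pow_subset {a : G} {n : ℕ}
    (h : nonUnits H ^ n ⊆ a • (H : Set G)) : OmegaBound H a n := by
  classical
  rintro s hs ⟨c, hc, hprod⟩
  set ns := s.filter (· ∈ nonUnits H)
  set us := s.filter (· ∉ nonUnits H)
  have hus : IsHUnit H us.prod := isHUnit_multiset_prod fun x hx => by
    obtain ⟨hxs, hx⟩ := Multiset.mem_filter.mp hx
    exact ⟨hs x hxs, not_not.mp fun h' => hx ⟨hs x hxs, h'⟩⟩
  rcases le_total (Multiset.card ns) n with hcard | hcard
  · refine ⟨ns, Multiset.filter_le _ _, hcard, c * us.prod⁻¹, H.mul_mem hc hus.2, ?_⟩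
    rw [← mul_assoc, ← hprod, ← Multiset.prod_filter_mul_prod_filter_not (· ∈ nonUnits H) (s := s)]
    exact (mul_inv_cancel_right _ _).symm
  · obtain ⟨t, hts, rfl⟩ := Multiset.exists_le_card_eq hcard
    obtain ⟨c', hc', hc't⟩ := h (Multiset.prod_mem_pow_card fun x hx =>
      (Multiset.mem_filter.mp (Multiset.mem_of_le hts hx)).2)
    exact ⟨t, hts.trans (Multiset.filter_le _ _), le_rfl, c', hc', hc't.symm⟩

lemma nonUnits_pow_Mdeg_subset (hsp : IsStronglyPrimary H) {a : G} (ha : a ∈ nonUnits H) :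
    nonUnits H ^ Mdeg H a ⊆ a • (H : Set G) := by
  obtain ⟨n, hn, hsub⟩ := hsp.2 a ha
  exact (Nat.sInf_mem (s := {n | 0 < n ∧ nonUnits H ^ n ⊆ a • (H : Set G)}) ⟨n, hn, hsub⟩).2

lemma omegaDeg_le_of_omegaBound {a : G} {n : ℕ} (h : OmegaBound H a n) :
    omegaDeg H a ≤ n :=
  sInf_le ⟨n, h, rfl⟩

end StronglyPrimary

theorem stmt10_general {G : Type*} [CommGroup G] (H : Submonoid G)
    (hsp : IsStronglyPrimary H) :
    ∀ u : G, IsHAtom H u → omegaDeg H u ≤ ((Mdeg H u : ℕ) : ℕ∞) ∧ omegaDeg H u < ⊤ := by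
  intro u hu
  have hω : omegaDeg H u ≤ (Mdeg H u : ℕ∞) := omegaDeg_le_of_omegaBound
    (omegaBound_of_nonUnits_pow_subset (nonUnits_pow_Mdeg_subset hsp hu.mem_nonUnits))
  exact ⟨hω, hω.trans_lt (ENat.natCast_lt_top _)⟩

/-- Let `H` be a strongly primary monoid. For every atom `u ∈ H`
we have `ω(u) ≤ M(u)`; in particular `ω(u) < ∞`. -/
theorem stmt10 {G : Type*} [CommGroup G] (H : Submonoid G) (hq : IsQuotientGroup H)
    (hsp : IsStronglyPrimary H) :
    ∀ u : G, IsHAtom H u → omegaDeg H u ≤ ((Mdeg H u : ℕ) : ℕ∞) ∧ omegaDeg H u < ⊤ :=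
  stmt10_general H hsp
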